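/- arXiv:2511.17328 — 5 statements merged into one kernel-verified Lean document; each statement's English description precedes it below -/
import Mathlib

section
/- Suppose a traveling front exists, i.e. c_f > 0 satisfies φ_f(c_f) = θ and U_f(z) < θ for all z < 0. Then for every c with 0 < c < c_f one has φ_f(c) > θ, and for every c > c_f one has φ_f(c) < θ. In particular, c_f is the unique positive root of the equation φ_f(c) = θ. -/
/-!
Write `F x = ∫_{-∞}^x K`. One integration by parts gives
`φ_f(c) = c⁻¹ ∫_{-∞}^0 e^{x/c} F(x) dx`, and `U = U_f` solves `c_f U' + U = F`;
integrating by parts once more yields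
`φ_f(c) - U(0) = (c_f - c)/c² · ∫_{-∞}^0 e^{x/c} (U(0) - U(x)) dx`.
At `c = c_f` this says `U(0) = θ`, and then `U < θ` on `(-∞, 0)` makes the integral positive,
so `φ_f(c) - θ` has the sign of `c_f - c`.
-/

open MeasureTheory Real Filter Set Topology

/-- Front speed index function `φ_f(c) = ∫_{-∞}^0 K - ∫_{-∞}^0 e^{x/c} K(x) dx`. -/
noncomputable def phiF (K : ℝ → ℝ) (c : ℝ) : ℝ :=
  (∫ x in Iio (0:ℝ), K x) - ∫ x in Iio (0:ℝ), Real.exp (x / c) * K x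

/-- Front profile `U_f(z) = (1/c_f) ∫_{-∞}^z e^{(x-z)/c_f} (∫_{-∞}^x K(y) dy) dx`. -/
noncomputable def Uf (K : ℝ → ℝ) (cf z : ℝ) : ℝ :=
  (1 / cf) * ∫ x in Iic z, Real.exp ((x - z) / cf) * ∫ y in Iic x, K y

theorem integrable_of_abs_le_exp_neg_abs {K : ℝ → ℝ} {α ρ : ℝ} (hK : Continuous K)
    (hρ : 0 < ρ) (hKbd : ∀ x, |K x| ≤ α * exp (-ρ * |x|)) : Integrable K := by
  have hexp : Integrable fun x : ℝ => exp (-ρ * |x|) := by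
    rw [← integrableOn_univ, ← Iic_union_Ioi (a := (0:ℝ)), integrableOn_union]
    constructor
    · refine (integrableOn_exp_mul_Iic hρ 0).congr_fun (fun x hx => ?_) measurableSet_Iic
      rw [abs_of_nonpos hx, neg_mul_neg]
    · refine (exp_neg_integrableOn_Ioi 0 hρ).congr_fun (fun x hx => ?_) measurableSet_Ioi
      simp only [abs_of_pos (mem_Ioi.1 hx), neg_mul]
  exact (hexp.const_mul α).mono' hK.aestronglyMeasurable (.of_forall hKbd)

theorem hasDerivAt_integral_Iic {g : ℝ → ℝ} (hg : Continuous g)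
    (hgi : ∀ a, IntegrableOn g (Iic a)) (x : ℝ) :
    HasDerivAt (fun z => ∫ y in Iic z, g y) (g x) x := by
  have hsplit :
      (fun z => ∫ y in Iic z, g y) = fun z => (∫ y in Iic 0, g y) + ∫ y in 0..z, g y := by
    ext z
    rw [← intervalIntegral.integral_Iic_sub_Iic (hgi 0) (hgi z), add_sub_cancel]
  rw [hsplit]
  exact (intervalIntegral.integral_hasDerivAt_right (hg.intervalIntegrable _ _)
    (hg.stronglyMeasurableAtFilter _ _) hg.continuousAt).const_add _

theorem continuous_integral_Iic {g : ℝ → ℝ} (hg : Continuous g)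
    (hgi : ∀ a, IntegrableOn g (Iic a)) : Continuous fun z => ∫ y in Iic z, g y :=
  continuous_iff_continuousAt.2 fun x => (hasDerivAt_integral_Iic hg hgi x).continuousAt

theorem abs_integral_Iic_le {g : ℝ → ℝ} (hg : Integrable g) (x : ℝ) :
    |∫ y in Iic x, g y| ≤ ∫ y, |g y| :=
  (abs_integral_le_integral_abs).trans
    (setIntegral_le_integral hg.abs (.of_forall fun _ => abs_nonneg _))

section ExpWeight

variable {G g : ℝ → ℝ} {a b C : ℝ}

theorem integrableOn_exp_mul_mul_Iic (hb : 0 < b) (hG : Continuous G) (hGC : ∀ x, |G x| ≤ C)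
    (a : ℝ) : IntegrableOn (fun x => exp (b * x) * G x) (Iic a) :=
  (integrableOn_exp_mul_Iic hb a).mul_bdd hG.aestronglyMeasurable (.of_forall hGC)

theorem integral_Iic_exp_mul_mul_deriv (hb : 0 < b) (hG : ∀ x, HasDerivAt G (g x) x)
    (hGC : ∀ x, |G x| ≤ C) (hg : IntegrableOn (fun x => exp (b * x) * g x) (Iic a)) :
    ∫ x in Iic a, exp (b * x) * g x =
      exp (b * a) * G a - b * ∫ x in Iic a, exp (b * x) * G x := by
  have hGcont : Continuous G := continuous_iff_continuousAt.2 fun x => (hG x).continuousAt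
  have hexp : ∀ x, HasDerivAt (fun x => exp (b * x)) (b * exp (b * x)) x := fun x => by
    simpa [mul_comm] using ((hasDerivAt_id x).const_mul b).exp
  have hcont : Continuous fun x => exp (b * x) * G x :=
    (continuous_const_mul b).rexp.mul hGcont
  have hGint : IntegrableOn (fun x => b * exp (b * x) * G x) (Iic a) := by
    simp_rw [mul_assoc]
    exact (integrableOn_exp_mul_mul_Iic hb hGcont hGC a).const_mul b
  have hlim : Tendsto (fun x => exp (b * x) * G x) atBot (𝓝 0) :=
    (tendsto_exp_atBot.comp (tendsto_id.const_mul_atBot hb)).zero_mul_isBoundedUnder_le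
      ⟨C, eventually_map.2 (.of_forall hGC)⟩
  have h := integral_Iic_mul_deriv_eq_deriv_mul (fun x _ => hexp x) (fun x _ => hG x) hg hGint
    ((hcont.tendsto a).mono_left nhdsWithin_le_nhds) hlim
  simpa only [sub_zero, mul_assoc, integral_const_mul] using h

end ExpWeight

theorem setIntegral_Iic_pos {f : ℝ → ℝ} {a : ℝ} (hf : IntegrableOn f (Iic a))
    (hpos : ∀ x < a, 0 < f x) : 0 < ∫ x in Iic a, f x := by
  rw [integral_Iic_eq_integral_Iio]
  have hIio : IntegrableOn f (Iio a) := hf.mono_set Iio_subset_Iic_self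
  rw [setIntegral_pos_iff_support_of_nonneg_ae
    ((ae_restrict_iff' measurableSet_Iio).2 (.of_forall fun x hx => (hpos x hx).le)) hIio,
    inter_eq_right.2 (show Iio a ⊆ Function.support f from fun x hx => (hpos x hx).ne'),
    volume_Iio]
  exact ENNReal.zero_lt_top

section Front

variable {K : ℝ → ℝ}

theorem phiF_eq (hK : Continuous K) (hKi : Integrable K) {c : ℝ} (hc : 0 < c) :
    phiF K c = c⁻¹ * ∫ x in Iic (0 : ℝ), exp (c⁻¹ * x) * ∫ y in Iic x, K y := by
  have hb : 0 < c⁻¹ := inv_pos.2 hc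
  have hKexp : IntegrableOn (fun x => exp (c⁻¹ * x) * K x) (Iic 0) :=
    hKi.integrableOn.bdd_mul (c := 1) (by fun_prop) <|
      (ae_restrict_iff' measurableSet_Iic).2 <| .of_forall fun x (hx : x ≤ 0) => by
        rw [norm_of_nonneg (exp_pos _).le, exp_le_one_iff]
        exact mul_nonpos_of_nonneg_of_nonpos hb.le hx
  have hIBP := integral_Iic_exp_mul_mul_deriv hb
    (hasDerivAt_integral_Iic hK fun _ => hKi.integrableOn) (abs_integral_Iic_le hKi) hKexp
  simp only [phiF, ← integral_Iic_eq_integral_Iio, div_eq_inv_mul, hIBP, mul_zero, exp_zero,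
    one_mul, sub_sub_cancel]

theorem Uf_eq_exp_mul_integral (τ z : ℝ) :
    Uf K τ z =
      τ⁻¹ * exp (-(τ⁻¹ * z)) * ∫ x in Iic z, exp (τ⁻¹ * x) * ∫ y in Iic x, K y := by
  rw [Uf, one_div, mul_assoc, ← integral_const_mul (exp (-(τ⁻¹ * z)))]
  congr 1
  refine setIntegral_congr_fun measurableSet_Iic fun x _ => ?_
  rw [← mul_assoc, ← exp_add]
  ring_nf

theorem abs_Uf_le (hKi : Integrable K) {τ : ℝ} (hτ : 0 < τ) (z : ℝ) :
    |Uf K τ z| ≤ ∫ y, |K y| := by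
  set M := ∫ y, |K y|
  have hb : 0 < τ⁻¹ := inv_pos.2 hτ
  have hB :
      |∫ x in Iic z, exp (τ⁻¹ * x) * ∫ y in Iic x, K y| ≤ M * (exp (τ⁻¹ * z) / τ⁻¹) := by
    rw [← integral_exp_mul_Iic hb, ← integral_const_mul]
    refine abs_integral_le_integral_abs.trans <| integral_mono_of_nonneg
      (.of_forall fun _ => abs_nonneg _) ((integrableOn_exp_mul_Iic hb z).const_mul M)
      (.of_forall fun x => ?_)
    dsimp only
    rw [abs_mul, abs_of_pos (exp_pos _), mul_comm M]
    exact mul_le_mul_of_nonneg_left (abs_integral_Iic_le hKi x) (exp_pos _).le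
  rw [Uf_eq_exp_mul_integral, abs_mul, abs_mul, abs_of_pos hb, abs_of_pos (exp_pos _)]
  calc τ⁻¹ * exp (-(τ⁻¹ * z)) * |∫ x in Iic z, exp (τ⁻¹ * x) * ∫ y in Iic x, K y|
      ≤ τ⁻¹ * exp (-(τ⁻¹ * z)) * (M * (exp (τ⁻¹ * z) / τ⁻¹)) := by gcongr
    _ = M := by rw [exp_neg]; field_simp

theorem hasDerivAt_Uf (hK : Continuous K) (hKi : Integrable K) {τ : ℝ} (hτ : 0 < τ) (z : ℝ) :
    HasDerivAt (Uf K τ) (τ⁻¹ * ((∫ y in Iic z, K y) - Uf K τ z)) z := by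
  have hb : 0 < τ⁻¹ := inv_pos.2 hτ
  have hFc := continuous_integral_Iic hK fun _ => hKi.integrableOn
  have hB := hasDerivAt_integral_Iic (g := fun x => exp (τ⁻¹ * x) * ∫ y in Iic x, K y)
    ((continuous_const_mul τ⁻¹).rexp.mul hFc)
    (integrableOn_exp_mul_mul_Iic hb hFc (abs_integral_Iic_le hKi)) z
  have hexp : HasDerivAt (fun z => τ⁻¹ * exp (-(τ⁻¹ * z)))
      (τ⁻¹ * (-τ⁻¹ * exp (-(τ⁻¹ * z)))) z := by
    simpa [mul_comm] using (((hasDerivAt_id z).const_mul τ⁻¹).neg.exp).const_mul τ⁻¹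
  rw [show Uf K τ = _ from funext (Uf_eq_exp_mul_integral τ)]
  refine (hexp.mul hB).congr_deriv ?_
  simp only [exp_neg]
  field_simp
  ring

theorem continuous_Uf (hK : Continuous K) (hKi : Integrable K) {τ : ℝ} (hτ : 0 < τ) :
    Continuous (Uf K τ) :=
  continuous_iff_continuousAt.2 fun z => (hasDerivAt_Uf hK hKi hτ z).continuousAt

theorem phiF_sub_Uf_zero (hK : Continuous K) (hKi : Integrable K) {c τ : ℝ} (hc : 0 < c)
    (hτ : 0 < τ) :
    phiF K c - Uf K τ 0 =
      (τ - c) / c ^ 2 * ∫ x in Iic (0 : ℝ), exp (c⁻¹ * x) * (Uf K τ 0 - Uf K τ x) := by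
  set F := fun x => ∫ y in Iic x, K y
  set u := Uf K τ
  have hb : 0 < c⁻¹ := inv_pos.2 hc
  have hu : ∀ x, HasDerivAt u (τ⁻¹ * (F x - u x)) x := hasDerivAt_Uf hK hKi hτ
  have huc : Continuous u := continuous_Uf hK hKi hτ
  have hFc : Continuous F := continuous_integral_Iic hK fun _ => hKi.integrableOn
  have hFint := integrableOn_exp_mul_mul_Iic hb hFc (abs_integral_Iic_le hKi) 0
  have huint := integrableOn_exp_mul_mul_Iic hb huc (abs_Uf_le hKi hτ) 0
  have hIBP := integral_Iic_exp_mul_mul_deriv hb hu (abs_Uf_le hKi hτ) <|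
    IntegrableOn.congr_fun ((hFint.sub huint).const_mul τ⁻¹)
      (fun x _ => by simp only [Pi.sub_apply]; ring) measurableSet_Iic
  have hu' : ∫ x in Iic (0 : ℝ), exp (c⁻¹ * x) * (τ⁻¹ * (F x - u x)) =
      τ⁻¹ * ((∫ x in Iic (0 : ℝ), exp (c⁻¹ * x) * F x) -
        ∫ x in Iic (0 : ℝ), exp (c⁻¹ * x) * u x) := by
    rw [← integral_sub hFint huint, ← integral_const_mul]
    exact setIntegral_congr_fun measurableSet_Iic fun x _ => by ring
  have hdiff : ∫ x in Iic (0 : ℝ), exp (c⁻¹ * x) * (u 0 - u x) =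
      c * u 0 - ∫ x in Iic (0 : ℝ), exp (c⁻¹ * x) * u x := by
    simp_rw [mul_sub]
    rw [integral_sub ((integrableOn_exp_mul_Iic hb 0).mul_const _) huint, integral_mul_const,
      integral_exp_mul_Iic hb, mul_zero, exp_zero, one_div, inv_inv, mul_comm]
  rw [phiF_eq hK hKi hc, hdiff]
  rw [hu', mul_zero, exp_zero, one_mul] at hIBP
  field_simp at hIBP ⊢
  linear_combination hIBP

end Front

theorem statement0_general (K : ℝ → ℝ) (θ cf : ℝ)
    (hK : Continuous K)
    (hKdecay : ∃ α > (0:ℝ), ∃ ρ > (0:ℝ), ∀ x : ℝ, |K x| ≤ α * Real.exp (-ρ * |x|))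
    (hcf : 0 < cf)
    (hroot : phiF K cf = θ)
    (hsub : ∀ z < 0, Uf K cf z < θ) :
    (∀ c : ℝ, 0 < c → c < cf → θ < phiF K c) ∧
    (∀ c : ℝ, cf < c → phiF K c < θ) ∧
    (∀ c : ℝ, 0 < c → phiF K c = θ → c = cf) := by
  obtain ⟨α, -, ρ, hρ, hKbd⟩ := hKdecay
  have hKi := integrable_of_abs_le_exp_neg_abs hK hρ hKbd
  have hθ : Uf K cf 0 = θ := by
    have h := phiF_sub_Uf_zero hK hKi hcf hcf
    rwa [sub_self, zero_div, zero_mul, hroot, sub_eq_zero, eq_comm] at h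
  subst hθ
  have hgap : ∀ c, 0 < c →
      0 < ∫ x in Iic (0 : ℝ), exp (c⁻¹ * x) * (Uf K cf 0 - Uf K cf x) := fun c hc =>
    setIntegral_Iic_pos
      (integrableOn_exp_mul_mul_Iic (inv_pos.2 hc)
        (continuous_const.sub (continuous_Uf hK hKi hcf))
        (fun x => (abs_sub _ _).trans (add_le_add (abs_Uf_le hKi hcf 0) (abs_Uf_le hKi hcf x))) 0)
      fun x hx => mul_pos (exp_pos _) (sub_pos.2 (hsub x hx))
  have hbelow : ∀ c, 0 < c → c < cf → Uf K cf 0 < phiF K c := fun c hc hlt => by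
    have := mul_pos (div_pos (sub_pos.2 hlt) (pow_pos hc 2)) (hgap c hc)
    linarith [phiF_sub_Uf_zero hK hKi hc hcf]
  have habove : ∀ c, cf < c → phiF K c < Uf K cf 0 := fun c hlt => by
    have hc := hcf.trans hlt
    have := mul_neg_of_neg_of_pos
      (div_neg_of_neg_of_pos (sub_neg.2 hlt) (pow_pos hc 2)) (hgap c hc)
    linarith [phiF_sub_Uf_zero hK hKi hc hcf]
  refine ⟨hbelow, habove, fun c hc heq => ?_⟩
  rcases lt_trichotomy c cf with hlt | rfl | hlt
  · exact absurd heq (hbelow c hc hlt).ne'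
  · rfl
  · exact absurd heq (habove c hlt).ne

theorem statement0 (K : ℝ → ℝ) (θ cf : ℝ)
    (hK : Continuous K)
    (hKdecay : ∃ α > (0:ℝ), ∃ ρ > (0:ℝ), ∀ x : ℝ, |K x| ≤ α * Real.exp (-ρ * |x|))
    (hKint : (∫ x : ℝ, K x) = 1)
    (hθ : 0 < θ) (hcf : 0 < cf)
    (hroot : phiF K cf = θ)
    (hsub : ∀ z < 0, Uf K cf z < θ) :
    (∀ c : ℝ, 0 < c → c < cf → θ < phiF K c) ∧
    (∀ c : ℝ, cf < c → phiF K c < θ) ∧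
    (∀ c : ℝ, 0 < c → phiF K c = θ → c = cf) :=
  statement0_general K θ cf hK hKdecay hcf hroot hsub
end

section
/- Suppose c_f > 0 satisfies φ_f(c_f) = θ. Then for every λ > −1 the identity φ_f(c_f/(λ+1)) = (λ+1)·( θ − (λ/c_f) ∫_{−∞}^0 e^{(λ+1)x/c_f} U_f(x) dx ) holds. -/
open MeasureTheory Real Filter Set Topology

/-!
Write `F x = ∫_{-∞}^x K`. For `h` decaying exponentially at `-∞`, Fubini on the triangle
`{y ≤ x < 0}` gives `a ∫_{-∞}^0 e^{ax} ∫_{-∞}^x h = ∫_{-∞}^0 h - ∫_{-∞}^0 e^{ay} h(y) dy`.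
With `h = K` and `a = 1/c` this reads `c φ_f(c) = ∫_{-∞}^0 e^{x/c} F(x) dx`. Since
`e^{z/c_f} U_f(z)` is `1/c_f` times the primitive of `e^{x/c_f} F(x)`, the same identity with
`h = e^{x/c_f} F` and `a = λ/c_f` turns `λ ∫_{-∞}^0 e^{(λ+1)x/c_f} U_f` into the difference of
these integrals at the speeds `c_f` and `c_f/(λ+1)`, i.e. of `c_f θ` and `c_f φ_f(c_f/(λ+1))/(λ+1)`.
-/

lemma mul_integral_exp_mul_Ico (a : ℝ) {y : ℝ} (hy : y ≤ 0) :
    a * ∫ x in Ico y 0, exp (a * x) = 1 - exp (a * y) := by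
  rcases eq_or_ne a 0 with rfl | ha
  · simp
  rw [setIntegral_congr_set Ico_ae_eq_Ioc, ← intervalIntegral.integral_of_le hy,
    intervalIntegral.integral_comp_mul_left exp ha, integral_exp, mul_zero, exp_zero, smul_eq_mul,
    mul_inv_cancel_left₀ ha]

lemma measurable_integral_Iic {f : ℝ → ℝ} (hf : Measurable f) :
    Measurable fun x => ∫ y in Iic x, f y := by
  have hset : MeasurableSet {p : ℝ × ℝ | p.2 ≤ p.1} :=
    measurableSet_le measurable_snd measurable_fst
  have hF := ((hf.comp measurable_snd).indicator hset).stronglyMeasurable.integral_prod_right'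
    (ν := volume)
  convert hF.measurable using 2 with x
  rw [← integral_indicator measurableSet_Iic]
  rfl

section ExpDecay

variable {h : ℝ → ℝ} {C s : ℝ}

lemma integrableOn_Iic_of_abs_le_exp (hh : Measurable h) (hs : 0 < s)
    (hb : ∀ y ≤ 0, |h y| ≤ C * exp (s * y)) {x : ℝ} (hx : x ≤ 0) :
    IntegrableOn h (Iic x) := by
  refine ((integrableOn_exp_mul_Iic hs x).const_mul C).mono' hh.aestronglyMeasurable.restrict ?_
  filter_upwards [ae_restrict_mem measurableSet_Iic] with y hy
  exact hb y (le_trans hy hx)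

lemma integral_abs_Iic_le (hh : Measurable h) (hs : 0 < s)
    (hb : ∀ y ≤ 0, |h y| ≤ C * exp (s * y)) {x : ℝ} (hx : x ≤ 0) :
    ∫ y in Iic x, |h y| ≤ C / s * exp (s * x) := by
  calc ∫ y in Iic x, |h y| ≤ ∫ y in Iic x, C * exp (s * y) :=
        setIntegral_mono_on (integrableOn_Iic_of_abs_le_exp hh hs hb hx).abs
          ((integrableOn_exp_mul_Iic hs x).const_mul C) measurableSet_Iic
          fun y hy => hb y (le_trans hy hx)
    _ = C / s * exp (s * x) := by rw [integral_const_mul, integral_exp_mul_Iic hs]; ring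

lemma abs_integral_Iic_le_s1 (hh : Measurable h) (hs : 0 < s)
    (hb : ∀ y ≤ 0, |h y| ≤ C * exp (s * y)) {x : ℝ} (hx : x ≤ 0) :
    |∫ y in Iic x, h y| ≤ C / s * exp (s * x) :=
  (abs_integral_le_integral_abs).trans (integral_abs_Iic_le hh hs hb hx)

lemma abs_exp_mul_le (hb : ∀ y ≤ 0, |h y| ≤ C * exp (s * y)) (a : ℝ) :
    ∀ y ≤ 0, |exp (a * y) * h y| ≤ C * exp ((a + s) * y) := by
  intro y hy
  rw [abs_mul, abs_of_pos (exp_pos _), add_mul, exp_add, mul_left_comm]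
  exact mul_le_mul_of_nonneg_left (hb y hy) (exp_pos _).le

lemma integrableOn_exp_mul_Iio (hh : Measurable h) (hb : ∀ y ≤ 0, |h y| ≤ C * exp (s * y))
    {a : ℝ} (has : 0 < a + s) :
    IntegrableOn (fun y => exp (a * y) * h y) (Iio 0) :=
  (integrableOn_Iic_of_abs_le_exp (by fun_prop) has (abs_exp_mul_le hb a) le_rfl).mono_set
    Iio_subset_Iic_self

lemma integrable_uncurry_indicator_Iic (hh : Measurable h) (hs : 0 < s)
    (hb : ∀ y ≤ 0, |h y| ≤ C * exp (s * y)) {a : ℝ} (has : 0 < a + s) :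
    Integrable (Function.uncurry fun x => (Iic x).indicator fun y => exp (a * x) * h y)
      ((volume.restrict (Iio 0)).prod (volume.restrict (Iio 0))) := by
  have hmeas :
      Measurable (Function.uncurry fun x => (Iic x).indicator fun y => exp (a * x) * h y) := by
    have hΦ : (Function.uncurry fun x => (Iic x).indicator fun y => exp (a * x) * h y)
        = {p : ℝ × ℝ | p.2 ≤ p.1}.indicator fun p => exp (a * p.1) * h p.2 := by
      ext ⟨x, y⟩
      simp [indicator_apply]
    rw [hΦ]
    exact Measurable.indicator (by fun_prop) (measurableSet_le measurable_snd measurable_fst)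
  refine (integrable_prod_iff hmeas.aestronglyMeasurable).2 ⟨?_, ?_⟩
  · filter_upwards [ae_restrict_mem measurableSet_Iio] with x hx
    exact (IntegrableOn.integrable_indicator (f := fun y => exp (a * x) * h y)
      ((integrableOn_Iic_of_abs_le_exp hh hs hb hx.le).const_mul _) measurableSet_Iic).restrict
  refine (((integrableOn_exp_mul_Iic has 0).mono_set Iio_subset_Iic_self).const_mul
    (C / s)).mono' (hmeas.norm.stronglyMeasurable.integral_prod_right').aestronglyMeasurable ?_
  filter_upwards [ae_restrict_mem measurableSet_Iio] with x hx
  simp only [Function.uncurry_apply_pair, norm_indicator_eq_indicator_norm]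
  rw [norm_of_nonneg (integral_nonneg fun _ => indicator_nonneg (fun _ _ => norm_nonneg _) _),
    setIntegral_indicator measurableSet_Iic, inter_eq_right.2 (Iic_subset_Iio.2 hx)]
  simp only [norm_mul, norm_of_nonneg (exp_pos _).le, norm_eq_abs]
  rw [integral_const_mul, add_mul, exp_add, mul_left_comm]
  exact mul_le_mul_of_nonneg_left (integral_abs_Iic_le hh hs hb hx.le) (exp_pos _).le

lemma integral_exp_mul_integral_Iic_eq (hh : Measurable h) (hs : 0 < s)
    (hb : ∀ y ≤ 0, |h y| ≤ C * exp (s * y)) {a : ℝ} (has : 0 < a + s) :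
    ∫ x in Iio 0, exp (a * x) * ∫ y in Iic x, h y
      = ∫ y in Iio 0, (∫ x in Ico y 0, exp (a * x)) * h y := by
  calc ∫ x in Iio 0, exp (a * x) * ∫ y in Iic x, h y
      = ∫ x in Iio 0, ∫ y in Iio 0, (Iic x).indicator (fun y => exp (a * x) * h y) y := by
        refine setIntegral_congr_fun measurableSet_Iio fun x hx => ?_
        rw [setIntegral_indicator measurableSet_Iic, inter_eq_right.2 (Iic_subset_Iio.2 hx),
          integral_const_mul]
    _ = ∫ y in Iio 0, ∫ x in Iio 0, (Iic x).indicator (fun y => exp (a * x) * h y) y :=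
        integral_integral_swap (integrable_uncurry_indicator_Iic hh hs hb has)
    _ = ∫ y in Iio 0, (∫ x in Ico y 0, exp (a * x)) * h y := by
        refine setIntegral_congr_fun measurableSet_Iio fun y hy => ?_
        have hswap : (fun x => (Iic x).indicator (fun y => exp (a * x) * h y) y)
            = (Ici y).indicator fun x => exp (a * x) * h y := by
          ext x
          simp [indicator_apply]
        rw [hswap, setIntegral_indicator measurableSet_Ici, inter_comm, Ici_inter_Iio,
          integral_mul_const]

lemma mul_integral_exp_mul_integral_Iic (hh : Measurable h) (hs : 0 < s)
    (hb : ∀ y ≤ 0, |h y| ≤ C * exp (s * y)) {a : ℝ} (has : 0 < a + s) :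
    a * ∫ x in Iio 0, exp (a * x) * ∫ y in Iic x, h y
      = (∫ y in Iio 0, h y) - ∫ y in Iio 0, exp (a * y) * h y := by
  rw [integral_exp_mul_integral_Iic_eq hh hs hb has, ← integral_const_mul,
    ← integral_sub ((integrableOn_Iic_of_abs_le_exp hh hs hb le_rfl).mono_set Iio_subset_Iic_self)
      (integrableOn_exp_mul_Iio hh hb has)]
  refine setIntegral_congr_fun measurableSet_Iio fun y hy => ?_
  rw [← mul_assoc, mul_integral_exp_mul_Ico a hy.le]
  ring

end ExpDecay

section Front

variable {K : ℝ → ℝ} {α ρ : ℝ}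

lemma mul_phiF_eq (hK : Measurable K) (hρ : 0 < ρ) (hKb : ∀ y ≤ 0, |K y| ≤ α * exp (ρ * y))
    {c : ℝ} (hc : 0 < c) :
    c * phiF K c = ∫ x in Iio 0, exp (c⁻¹ * x) * ∫ y in Iic x, K y := by
  simp_rw [phiF, div_eq_inv_mul]
  rw [← mul_integral_exp_mul_integral_Iic hK hρ hKb (a := c⁻¹) (by positivity),
    mul_inv_cancel_left₀ hc.ne']

lemma exp_mul_Uf (K : ℝ → ℝ) (cf z : ℝ) :
    exp (cf⁻¹ * z) * Uf K cf z = cf⁻¹ * ∫ x in Iic z, exp (cf⁻¹ * x) * ∫ y in Iic x, K y := by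
  rw [Uf, one_div, mul_left_comm, ← integral_const_mul]
  congr 1
  refine setIntegral_congr_fun measurableSet_Iic fun x _ => ?_
  rw [← mul_assoc, ← exp_add]
  ring_nf

lemma mul_integral_exp_mul_Uf (hK : Measurable K) (hρ : 0 < ρ)
    (hKb : ∀ y ≤ 0, |K y| ≤ α * exp (ρ * y)) {cf lam : ℝ} (hcf : 0 < cf) (hlam : -1 < lam) :
    lam * ∫ x in Iio 0, exp ((lam + 1) * x / cf) * Uf K cf x
      = (∫ x in Iio 0, exp (cf⁻¹ * x) * ∫ y in Iic x, K y)
        - ∫ x in Iio 0, exp ((lam + 1) / cf * x) * ∫ y in Iic x, K y := by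
  have hF : Measurable fun x => ∫ y in Iic x, K y := measurable_integral_Iic hK
  have hFb : ∀ x ≤ 0, |∫ y in Iic x, K y| ≤ α / ρ * exp (ρ * x) := fun x hx =>
    abs_integral_Iic_le_s1 hK hρ hKb hx
  have hspeed : 0 < lam / cf + (cf⁻¹ + ρ) := by
    have : 0 < (lam + 1) / cf := div_pos (by linarith) hcf
    rw [show lam / cf + (cf⁻¹ + ρ) = (lam + 1) / cf + ρ by ring]
    positivity
  calc lam * ∫ x in Iio 0, exp ((lam + 1) * x / cf) * Uf K cf x
      = lam / cf * ∫ x in Iio 0, exp (lam / cf * x) *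
          ∫ t in Iic x, exp (cf⁻¹ * t) * ∫ y in Iic t, K y := by
        rw [← integral_const_mul, ← integral_const_mul]
        congr 1
        ext x
        rw [show (lam + 1) * x / cf = lam / cf * x + cf⁻¹ * x by ring, exp_add, mul_assoc,
          exp_mul_Uf]
        ring
    _ = (∫ x in Iio 0, exp (cf⁻¹ * x) * ∫ y in Iic x, K y)
        - ∫ x in Iio 0, exp (lam / cf * x) * (exp (cf⁻¹ * x) * ∫ y in Iic x, K y) :=
      mul_integral_exp_mul_integral_Iic (by fun_prop) (by positivity) (abs_exp_mul_le hFb cf⁻¹)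
        hspeed
    _ = _ := by
        congr 1
        refine setIntegral_congr_fun measurableSet_Iio fun x _ => ?_
        rw [← mul_assoc, ← exp_add]
        ring_nf

end Front

theorem statement1_general (K : ℝ → ℝ) (θ cf : ℝ)
    (hK : Continuous K)
    (hKdecay : ∃ α > (0:ℝ), ∃ ρ > (0:ℝ), ∀ x : ℝ, |K x| ≤ α * Real.exp (-ρ * |x|))
    (hcf : 0 < cf)
    (hroot : phiF K cf = θ) :
    ∀ lam : ℝ, -1 < lam →
      phiF K (cf / (lam + 1)) =
        (lam + 1) * (θ - (lam / cf) *
          ∫ x in Iio (0:ℝ), Real.exp ((lam + 1) * x / cf) * Uf K cf x) := by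
  obtain ⟨α, -, ρ, hρ, hKdecay⟩ := hKdecay
  have hKb : ∀ y ≤ 0, |K y| ≤ α * exp (ρ * y) := fun y hy => by
    simpa [abs_of_nonpos hy] using hKdecay y
  intro lam hlam
  have hlam1 : 0 < lam + 1 := by linarith
  have hφ := mul_phiF_eq hK.measurable hρ hKb (div_pos hcf hlam1)
  have hθ := mul_phiF_eq hK.measurable hρ hKb hcf
  have hU := mul_integral_exp_mul_Uf hK.measurable hρ hKb hcf hlam
  rw [inv_div] at hφ
  rw [hroot] at hθ
  field_simp
  rw [hθ, hU, ← hφ, sub_sub_cancel, ← mul_assoc, mul_div_cancel₀ _ hlam1.ne']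

theorem statement1 (K : ℝ → ℝ) (θ cf : ℝ)
    (hK : Continuous K)
    (hKdecay : ∃ α > (0:ℝ), ∃ ρ > (0:ℝ), ∀ x : ℝ, |K x| ≤ α * Real.exp (-ρ * |x|))
    (hKint : (∫ x : ℝ, K x) = 1)
    (hθ : 0 < θ) (hcf : 0 < cf)
    (hroot : phiF K cf = θ) :
    ∀ lam : ℝ, -1 < lam →
      phiF K (cf / (lam + 1)) =
        (lam + 1) * (θ - (lam / cf) *
          ∫ x in Iio (0:ℝ), Real.exp ((lam + 1) * x / cf) * Uf K cf x) :=
  statement1_general K θ cf hK hKdecay hcf hroot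
end

section
/- The function φ_f is differentiable at every c > 0 with derivative φ_f'(c) = (1/c²) ∫_{−∞}^0 x e^{x/c} K(x) dx. Moreover, if c_f > 0 satisfies φ_f(c_f) = θ and U_f(z) < θ for all z < 0, then φ_f'(c_f) = −(1/c_f)·( θ − (1/c_f) ∫_{−∞}^0 e^{x/c_f} U_f(x) dx ) and φ_f'(c_f) < 0. -/
open MeasureTheory Real Filter Set Topology

/-!
The derivative of `phiF` comes from differentiating under the integral sign: on `c' > c / 2`
the `c'`-derivative of `exp (x / c') * K x` is dominated by a multiple of `exp (ρ x / 2)`.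

For the identity, `exp (x / c) * Uf K c x` is `1 / c` times the primitive from `-∞` of
`exp (s / c) * ∫_{-∞}^s K`. Two exchanges of the order of integration over `{s ≤ x < 0}`
turn `∫_{x<0} exp (x / c) Uf K c x` into `(1 / c) ∫_{t<0} (c² - (c² - c t) exp (t / c)) K t`,
that is `c φ_f(c) + ∫_{x<0} x exp (x / c) K x`. At `c = c_f` this is `c_f θ + c_f² φ_f'(c_f)`,
and it is `< c_f θ = θ ∫_{x<0} exp (x / c_f)` because `Uf < θ` on the negative half-line.
-/

lemma exp_div_le_one {x c : ℝ} (hx : x ≤ 0) (hc : 0 ≤ c) : exp (x / c) ≤ 1 :=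
  exp_le_one_iff.mpr (div_nonpos_of_nonpos_of_nonneg hx hc)

lemma neg_mul_exp_mul_le {r x : ℝ} (hr : 0 < r) : -x * exp (r * x) ≤ 2 / r * exp (r / 2 * x) := by
  have h : -x ≤ 2 / r * exp (-(r / 2 * x)) := by
    calc -x = 2 / r * (-(r / 2 * x)) := by field_simp
      _ ≤ 2 / r * exp (-(r / 2 * x)) := by
        gcongr; linarith [add_one_le_exp (-(r / 2 * x))]
  calc -x * exp (r * x) ≤ 2 / r * exp (-(r / 2 * x)) * exp (r * x) := by gcongr
    _ = 2 / r * exp (r / 2 * x) := by rw [mul_assoc, ← exp_add]; ring_nf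

lemma neg_mul_exp_div_le {x c : ℝ} (hc : 0 < c) : -x * exp (x / c) ≤ c := by
  have h : -x ≤ c * exp (-(x / c)) := by
    calc -x = c * (-(x / c)) := by field_simp
      _ ≤ c * exp (-(x / c)) := by gcongr; linarith [add_one_le_exp (-(x / c))]
  calc -x * exp (x / c) ≤ c * exp (-(x / c)) * exp (x / c) := by gcongr
    _ = c := by rw [mul_assoc, ← exp_add, neg_add_cancel, exp_zero, mul_one]

section ExpDecay

variable {f : ℝ → ℝ} {A b : ℝ}

theorem integrableOn_Iic_of_abs_le_exp_s2 (hf : Continuous f) (hb : 0 < b)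
    (hfb : ∀ s ≤ 0, |f s| ≤ A * exp (b * s)) (z : ℝ) : IntegrableOn f (Iic z) := by
  have h0 : IntegrableOn f (Iic 0) :=
    ((integrableOn_exp_mul_Iic hb 0).const_mul A).mono' hf.aestronglyMeasurable <|
      (ae_restrict_mem measurableSet_Iic).mono fun s hs => (norm_eq_abs _).trans_le (hfb s hs)
  refine (h0.union (hf.integrableOn_Icc (a := 0) (b := z))).mono_set fun s hs => ?_
  rcases le_or_gt s 0 with h | h
  exacts [Or.inl h, Or.inr ⟨h.le, hs⟩]

theorem abs_integral_Iic_le_of_abs_le_exp (hb : 0 < b)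
    (hfb : ∀ s ≤ 0, |f s| ≤ A * exp (b * s)) {z : ℝ} (hz : z ≤ 0) :
    |∫ s in Iic z, f s| ≤ A / b * exp (b * z) := by
  have h := norm_integral_le_of_norm_le ((integrableOn_exp_mul_Iic hb z).const_mul A) <|
    (ae_restrict_mem measurableSet_Iic).mono fun s hs =>
      (norm_eq_abs _).trans_le (hfb s (le_trans hs hz))
  rw [integral_const_mul, integral_exp_mul_Iic hb, norm_eq_abs] at h
  linarith [mul_div_assoc A (exp (b * z)) b, div_mul_eq_mul_div A b (exp (b * z))]

theorem continuous_integral_Iic_of_abs_le_exp (hf : Continuous f) (hb : 0 < b)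
    (hfb : ∀ s ≤ 0, |f s| ≤ A * exp (b * s)) : Continuous fun z => ∫ s in Iic z, f s := by
  have hfi := integrableOn_Iic_of_abs_le_exp_s2 hf hb hfb
  have h : (fun z => ∫ s in Iic z, f s) = fun z => (∫ s in (0:ℝ)..z, f s) + ∫ s in Iic 0, f s := by
    funext z
    rw [← intervalIntegral.integral_Iic_sub_Iic (hfi 0) (hfi z), sub_add_cancel]
  rw [h]
  exact (intervalIntegral.continuous_primitive (fun _ _ => hf.intervalIntegrable _ _) 0).add
    continuous_const

end ExpDecay

section Fubini

variable {w f : ℝ → ℝ} {W A b : ℝ}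

lemma indicator_setOf_le_apply_eq_Iic {E : Type*} [Zero E] (F : ℝ × ℝ → E) (x s : ℝ) :
    {p : ℝ × ℝ | p.2 ≤ p.1}.indicator F (x, s) = (Iic x).indicator (fun s => F (x, s)) s := by
  simp [indicator_apply]

lemma indicator_setOf_le_apply_eq_Ici {E : Type*} [Zero E] (F : ℝ × ℝ → E) (x s : ℝ) :
    {p : ℝ × ℝ | p.2 ≤ p.1}.indicator F (x, s) = (Ici s).indicator (fun x => F (x, s)) x := by
  simp [indicator_apply]

theorem integrable_indicator_le_of_abs_le_exp (hw : Continuous w) (hwW : ∀ x < 0, |w x| ≤ W)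
    (hf : Continuous f) (hb : 0 < b) (hfb : ∀ s ≤ 0, |f s| ≤ A * exp (b * s)) :
    Integrable ({p : ℝ × ℝ | p.2 ≤ p.1}.indicator fun p => w p.1 * f p.2)
      ((volume.restrict (Iio 0)).prod volume) := by
  have hmeas : AEStronglyMeasurable ({p : ℝ × ℝ | p.2 ≤ p.1}.indicator fun p => w p.1 * f p.2)
      ((volume.restrict (Iio 0)).prod volume) :=
    (((hw.comp continuous_fst).mul (hf.comp continuous_snd)).stronglyMeasurable.indicator
      (isClosed_le continuous_snd continuous_fst).measurableSet).aestronglyMeasurable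
  have hfi := integrableOn_Iic_of_abs_le_exp_s2 hf hb hfb
  have hslice : ∀ x, (∫ s, ‖({p : ℝ × ℝ | p.2 ≤ p.1}.indicator fun p => w p.1 * f p.2) (x, s)‖)
      = |w x| * ∫ s in Iic x, |f s| := fun x => by
    simp_rw [indicator_setOf_le_apply_eq_Iic _ x, norm_indicator_eq_indicator_norm, norm_mul,
      norm_eq_abs, integral_indicator measurableSet_Iic, integral_const_mul]
  have habs : ∀ s ≤ 0, |(|f s|)| ≤ A * exp (b * s) := fun s hs =>
    (abs_abs (f s)).trans_le (hfb s hs)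
  refine (integrable_prod_iff hmeas).2 ⟨Eventually.of_forall fun x => ?_, ?_⟩
  · simp_rw [indicator_setOf_le_apply_eq_Iic _ x]
    exact IntegrableOn.integrable_indicator ((hfi x).const_mul (w x)) measurableSet_Iic
  simp_rw [hslice]
  refine (((integrableOn_exp_mul_Iic hb 0).mono_set Iio_subset_Iic_self).const_mul
    (W * (A / b))).mono'
    (hw.abs.mul (continuous_integral_Iic_of_abs_le_exp hf.abs hb habs)).aestronglyMeasurable ?_
  refine (ae_restrict_mem measurableSet_Iio).mono fun x (hx : x < 0) => ?_
  have hW : 0 ≤ W := (abs_nonneg _).trans (hwW x hx)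
  have hI : |(∫ s in Iic x, |f s|)| ≤ A / b * exp (b * x) :=
    abs_integral_Iic_le_of_abs_le_exp hb habs hx.le
  rw [norm_eq_abs, abs_mul, abs_abs, mul_assoc]
  exact mul_le_mul (hwW x hx) hI (abs_nonneg _) hW

theorem integral_mul_integral_Iic_eq (hw : Continuous w) (hwW : ∀ x < 0, |w x| ≤ W)
    (hf : Continuous f) (hb : 0 < b) (hfb : ∀ s ≤ 0, |f s| ≤ A * exp (b * s)) :
    ∫ x in Iio 0, w x * ∫ s in Iic x, f s = ∫ s in Iio 0, (∫ x in Ico s 0, w x) * f s := by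
  set g := {p : ℝ × ℝ | p.2 ≤ p.1}.indicator fun p => w p.1 * f p.2
  have hx : ∀ x, ∫ s, g (x, s) = w x * ∫ s in Iic x, f s := fun x => by
    simp_rw [g, indicator_setOf_le_apply_eq_Iic _ x, integral_indicator measurableSet_Iic,
      integral_const_mul]
  have hs : ∀ s, ∫ x in Iio 0, g (x, s)
      = (Iio 0).indicator (fun s => (∫ x in Ico s 0, w x) * f s) s := fun s => by
    simp_rw [g, indicator_setOf_le_apply_eq_Ici _ _ s, integral_indicator measurableSet_Ici,
      Measure.restrict_restrict measurableSet_Ici, Ici_inter_Iio, integral_mul_const]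
    by_cases h : s < 0
    · rw [indicator_of_mem (show s ∈ Iio 0 from h)]
    · rw [indicator_of_notMem (show s ∉ Iio 0 from h), Ico_eq_empty h, Measure.restrict_empty,
        integral_zero_measure, zero_mul]
  calc ∫ x in Iio 0, w x * ∫ s in Iic x, f s = ∫ x in Iio 0, ∫ s, g (x, s) := by simp_rw [hx]
    _ = ∫ s, ∫ x in Iio 0, g (x, s) :=
      integral_integral_swap (integrable_indicator_le_of_abs_le_exp hw hwW hf hb hfb)
    _ = ∫ s in Iio 0, (∫ x in Ico s 0, w x) * f s := by
      simp_rw [hs]; exact integral_indicator measurableSet_Iio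

end Fubini

section Kernel

variable {K : ℝ → ℝ} {α ρ c : ℝ}

lemma abs_exp_div_mul_le {x : ℝ} (hx : x ≤ 0) (hc : 0 ≤ c) (y : ℝ) : |exp (x / c) * y| ≤ |y| := by
  rw [abs_mul, abs_of_pos (exp_pos _)]
  exact mul_le_of_le_one_left (abs_nonneg y) (exp_div_le_one hx hc)

lemma abs_mul_exp_div_mul_le (hρ : 0 < ρ) (hKb : ∀ s ≤ 0, |K s| ≤ α * exp (ρ * s))
    {x : ℝ} (hx : x ≤ 0) (hc : 0 ≤ c) :
    |x * exp (x / c) * K x| ≤ 2 * α / ρ * exp (ρ / 2 * x) := by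
  have hα : 0 ≤ α := nonneg_of_mul_nonneg_left ((abs_nonneg _).trans (hKb x hx)) (exp_pos _)
  calc |x * exp (x / c) * K x| = -x * |exp (x / c) * K x| := by
        rw [mul_assoc, abs_mul, abs_of_nonpos hx]
    _ ≤ -x * (α * exp (ρ * x)) := mul_le_mul_of_nonneg_left
        ((abs_exp_div_mul_le hx hc _).trans (hKb x hx)) (neg_nonneg.2 hx)
    _ = α * (-x * exp (ρ * x)) := by ring
    _ ≤ α * (2 / ρ * exp (ρ / 2 * x)) := mul_le_mul_of_nonneg_left (neg_mul_exp_mul_le hρ) hα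
    _ = 2 * α / ρ * exp (ρ / 2 * x) := by ring

lemma hasDerivAt_exp_div_mul (x y : ℝ) (hc : c ≠ 0) :
    HasDerivAt (fun c => exp (x / c) * y) (-(1 / c ^ 2) * (x * exp (x / c) * y)) c := by
  have h := (((hasDerivAt_inv hc).const_mul x).exp).mul_const y
  simp only [← div_eq_mul_inv] at h
  refine h.congr_deriv ?_
  ring

theorem hasDerivAt_integral_exp_div_mul (hK : Continuous K) (hρ : 0 < ρ)
    (hKb : ∀ s ≤ 0, |K s| ≤ α * exp (ρ * s)) (hc : 0 < c) :
    HasDerivAt (fun c => ∫ x in Iio 0, exp (x / c) * K x)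
      (∫ x in Iio 0, -(1 / c ^ 2) * (x * exp (x / c) * K x)) c := by
  have hball : ∀ c' ∈ Metric.ball c (c / 2), c / 2 < c' := fun c' hc' => by
    rw [Real.ball_eq_Ioo] at hc'; linarith [hc'.1]
  have hbound : ∀ x ≤ 0, ∀ c' ∈ Metric.ball c (c / 2),
      ‖-(1 / c' ^ 2) * (x * exp (x / c') * K x)‖ ≤ 4 / c ^ 2 * (2 * α / ρ * exp (ρ / 2 * x)) := by
    intro x hx c' hc'
    have hc'c : c / 2 < c' := hball c' hc'
    have hc'0 : 0 < c' := by linarith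
    have hinv : 1 / c' ^ 2 ≤ 4 / c ^ 2 := by
      rw [div_le_div_iff₀ (by nlinarith) (by positivity)]; nlinarith
    rw [norm_mul, norm_neg, norm_eq_abs, norm_eq_abs,
      abs_of_pos (by positivity : 0 < 1 / c' ^ 2)]
    exact mul_le_mul hinv (abs_mul_exp_div_mul_le hρ hKb hx (by linarith)) (abs_nonneg _)
      (by positivity)
  have hFi : IntegrableOn (fun x => exp (x / c) * K x) (Iio 0) :=
    (integrableOn_Iic_of_abs_le_exp_s2 (by fun_prop) hρ
      (fun x hx => (abs_exp_div_mul_le hx hc.le _).trans (hKb x hx)) 0).mono_set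
      Iio_subset_Iic_self
  have hboundi : IntegrableOn (fun x => 4 / c ^ 2 * (2 * α / ρ * exp (ρ / 2 * x))) (Iio 0) :=
    (((integrableOn_exp_mul_Iic (half_pos hρ) 0).mono_set Iio_subset_Iic_self).const_mul _).const_mul
      _
  exact (hasDerivAt_integral_of_dominated_loc_of_deriv_le (Metric.ball_mem_nhds c (half_pos hc))
    (Eventually.of_forall fun c' => (by fun_prop : Continuous fun x => exp (x / c') * K x)
      |>.aestronglyMeasurable) hFi
    (by fun_prop : Continuous fun x => -(1 / c ^ 2) * (x * exp (x / c) * K x)).aestronglyMeasurable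
    ((ae_restrict_mem measurableSet_Iio).mono fun x (hx : x < 0) => hbound x hx.le) hboundi
    (Eventually.of_forall fun x c' hc' =>
      hasDerivAt_exp_div_mul x (K x) (by linarith [hball c' hc']))).2

theorem hasDerivAt_phiF (hK : Continuous K) (hρ : 0 < ρ)
    (hKb : ∀ s ≤ 0, |K s| ≤ α * exp (ρ * s)) (hc : 0 < c) :
    HasDerivAt (phiF K) (1 / c ^ 2 * ∫ x in Iio 0, x * exp (x / c) * K x) c := by
  have h := (hasDerivAt_integral_exp_div_mul hK hρ hKb hc).const_sub (∫ x in Iio 0, K x)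
  rw [integral_const_mul, neg_mul, neg_neg] at h
  exact h

end Kernel

lemma integral_Ico_neg_mul_exp_div {c t : ℝ} (hc : 0 < c) (ht : t ≤ 0) :
    ∫ x in Ico t 0, -x * exp (x / c) = c ^ 2 - (c ^ 2 - c * t) * exp (t / c) := by
  have hderiv : ∀ x ∈ uIcc t 0,
      HasDerivAt (fun x => (c ^ 2 - c * x) * exp (x / c)) (-x * exp (x / c)) x := fun x _ => by
    have h := (((hasDerivAt_id x).const_mul c).const_sub (c ^ 2)).mul
      ((hasDerivAt_id x).div_const c).exp
    refine h.congr_deriv ?_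
    simp only [id]
    field_simp
    ring_nf
  rw [integral_Ico_eq_integral_Ioo, ← integral_Ioc_eq_integral_Ioo,
    ← intervalIntegral.integral_of_le ht, intervalIntegral.integral_eq_sub_of_hasDerivAt hderiv
      ((by fun_prop : Continuous fun x => -x * exp (x / c)).intervalIntegrable _ _)]
  simp

lemma integral_exp_div_Iio_zero {c : ℝ} (hc : 0 < c) : ∫ x in Iio 0, exp (x / c) = c := by
  simp_rw [setIntegral_congr_set Iio_ae_eq_Iic, div_eq_inv_mul,
    integral_exp_mul_Iic (inv_pos.2 hc)]
  simp

lemma exp_div_mul_Uf (K : ℝ → ℝ) (c z : ℝ) :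
    exp (z / c) * Uf K c z = 1 / c * ∫ x in Iic z, exp (x / c) * ∫ y in Iic x, K y := by
  have h : ∀ x, exp ((x - z) / c) * ∫ y in Iic x, K y
      = (exp (z / c))⁻¹ * (exp (x / c) * ∫ y in Iic x, K y) := fun x => by
    rw [sub_div, exp_sub, div_eq_inv_mul, mul_assoc]
  simp_rw [Uf, h, integral_const_mul]
  field_simp

section Profile

variable {K : ℝ → ℝ} {α ρ c : ℝ}

lemma abs_exp_div_mul_integral_Iic_le (hρ : 0 < ρ) (hKb : ∀ s ≤ 0, |K s| ≤ α * exp (ρ * s))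
    (hc : 0 ≤ c) {s : ℝ} (hs : s ≤ 0) :
    |exp (s / c) * ∫ y in Iic s, K y| ≤ α / ρ * exp (ρ * s) :=
  (abs_exp_div_mul_le hs hc _).trans (abs_integral_Iic_le_of_abs_le_exp hρ hKb hs)

lemma continuous_exp_div_mul_integral_Iic (hK : Continuous K) (hρ : 0 < ρ)
    (hKb : ∀ s ≤ 0, |K s| ≤ α * exp (ρ * s)) :
    Continuous fun s => exp (s / c) * ∫ y in Iic s, K y :=
  (continuous_exp.comp (continuous_id.div_const c)).mul
    (continuous_integral_Iic_of_abs_le_exp hK hρ hKb)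

theorem integral_exp_div_mul_Uf (hK : Continuous K) (hρ : 0 < ρ)
    (hKb : ∀ s ≤ 0, |K s| ≤ α * exp (ρ * s)) (hc : 0 < c) :
    ∫ x in Iio 0, exp (x / c) * Uf K c x = c * phiF K c + ∫ x in Iio 0, x * exp (x / c) * K x := by
  have hKi : IntegrableOn K (Iio 0) :=
    (integrableOn_Iic_of_abs_le_exp_s2 hK hρ hKb 0).mono_set Iio_subset_Iic_self
  have hEKi : IntegrableOn (fun x => exp (x / c) * K x) (Iio 0) :=
    (integrableOn_Iic_of_abs_le_exp_s2 (by fun_prop) hρ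
      (fun x hx => (abs_exp_div_mul_le hx hc.le _).trans (hKb x hx)) 0).mono_set
      Iio_subset_Iic_self
  have hTKi : IntegrableOn (fun x => x * exp (x / c) * K x) (Iio 0) :=
    (integrableOn_Iic_of_abs_le_exp_s2 (by fun_prop) (half_pos hρ)
      (fun x hx => abs_mul_exp_div_mul_le hρ hKb hx hc.le) 0).mono_set Iio_subset_Iic_self
  have hw : ∀ x < 0, |-x * exp (x / c)| ≤ c := fun x hx => by
    rw [abs_of_nonneg (mul_nonneg (neg_nonneg.2 hx.le) (exp_pos _).le)]
    exact neg_mul_exp_div_le hc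
  calc ∫ x in Iio 0, exp (x / c) * Uf K c x
      = 1 / c * ∫ x in Iio 0, 1 * ∫ s in Iic x, exp (s / c) * ∫ y in Iic s, K y := by
        simp_rw [exp_div_mul_Uf, one_mul, integral_const_mul]
    _ = 1 / c * ∫ s in Iio 0, (∫ x in Ico s 0, (1 : ℝ)) * (exp (s / c) * ∫ y in Iic s, K y) := by
        rw [integral_mul_integral_Iic_eq continuous_const (fun _ _ => (abs_one).le)
          (continuous_exp_div_mul_integral_Iic hK hρ hKb) hρ
          (fun _ => abs_exp_div_mul_integral_Iic_le hρ hKb hc.le)]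
    _ = 1 / c * ∫ s in Iio 0, -s * exp (s / c) * ∫ y in Iic s, K y := by
        congr 1
        refine setIntegral_congr_fun measurableSet_Iio fun s (hs : s < 0) => ?_
        rw [setIntegral_const, volume_real_Ico_of_le hs.le, smul_eq_mul, mul_one]
        ring
    _ = 1 / c * ∫ t in Iio 0, (∫ x in Ico t 0, -x * exp (x / c)) * K t := by
        rw [integral_mul_integral_Iic_eq (by fun_prop) hw hK hρ hKb]
    _ = 1 / c * ∫ t in Iio 0,
          (c ^ 2 * (K t - exp (t / c) * K t) + c * (t * exp (t / c) * K t)) := by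
        congr 1
        refine setIntegral_congr_fun measurableSet_Iio fun t (ht : t < 0) => ?_
        rw [integral_Ico_neg_mul_exp_div hc ht.le]
        ring
    _ = c * phiF K c + ∫ x in Iio 0, x * exp (x / c) * K x := by
        have hKEi : IntegrableOn (fun t => K t - exp (t / c) * K t) (Iio 0) := hKi.sub hEKi
        rw [integral_add (hKEi.const_mul _) (hTKi.const_mul _), integral_const_mul,
          integral_const_mul, integral_sub hKi hEKi, phiF]
        field_simp

theorem integral_exp_div_mul_Uf_lt (hK : Continuous K) (hρ : 0 < ρ)
    (hKb : ∀ s ≤ 0, |K s| ≤ α * exp (ρ * s)) (hc : 0 < c) {θ : ℝ}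
    (hU : ∀ z < 0, Uf K c z < θ) :
    ∫ x in Iio 0, exp (x / c) * Uf K c x < c * θ := by
  have hG : ∀ z ≤ 0,
      |∫ s in Iic z, exp (s / c) * ∫ y in Iic s, K y| ≤ α / ρ / ρ * exp (ρ * z) :=
    fun z => abs_integral_Iic_le_of_abs_le_exp hρ
      (fun _ => abs_exp_div_mul_integral_Iic_le hρ hKb hc.le)
  have hUi : IntegrableOn (fun x => exp (x / c) * Uf K c x) (Iio 0) := by
    simp_rw [exp_div_mul_Uf]
    exact ((integrableOn_Iic_of_abs_le_exp_s2 (continuous_integral_Iic_of_abs_le_exp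
      (continuous_exp_div_mul_integral_Iic hK hρ hKb) hρ
      (fun _ => abs_exp_div_mul_integral_Iic_le hρ hKb hc.le)) hρ hG 0).mono_set
      Iio_subset_Iic_self).const_mul _
  have hEi : IntegrableOn (fun x => θ * exp (x / c)) (Iio 0) := by
    simp_rw [div_eq_inv_mul]
    exact ((integrableOn_exp_mul_Iic (inv_pos.2 hc) 0).mono_set Iio_subset_Iic_self).const_mul θ
  have hpos : ∀ x < 0, 0 < θ * exp (x / c) - exp (x / c) * Uf K c x := fun x hx => by
    linarith [mul_lt_mul_of_pos_left (hU x hx) (exp_pos (x / c)), mul_comm θ (exp (x / c))]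
  have hint : 0 < ∫ x in Iio 0, (θ * exp (x / c) - exp (x / c) * Uf K c x) := by
    rw [setIntegral_pos_iff_support_of_nonneg_ae
      ((ae_restrict_mem measurableSet_Iio).mono fun x hx => (hpos x hx).le) (hEi.sub hUi)]
    exact (by simp : 0 < volume (Iio (0 : ℝ))).trans_le
      (measure_mono fun x hx => ⟨(hpos x hx).ne', hx⟩)
  rw [integral_sub hEi hUi, integral_const_mul, integral_exp_div_Iio_zero hc] at hint
  linarith

end Profile

theorem statement2_general (K : ℝ → ℝ) (θ cf : ℝ)
    (hK : Continuous K)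
    (hKdecay : ∃ α > (0:ℝ), ∃ ρ > (0:ℝ), ∀ x : ℝ, |K x| ≤ α * Real.exp (-ρ * |x|)) :
    (∀ c : ℝ, 0 < c →
      HasDerivAt (phiF K) ((1 / c ^ 2) * ∫ x in Iio (0:ℝ), x * Real.exp (x / c) * K x) c) ∧
    (0 < cf → phiF K cf = θ → (∀ z < 0, Uf K cf z < θ) →
      ((1 / cf ^ 2) * ∫ x in Iio (0:ℝ), x * Real.exp (x / cf) * K x)
          = -(1 / cf) * (θ - (1 / cf) * ∫ x in Iio (0:ℝ), Real.exp (x / cf) * Uf K cf x) ∧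
      ((1 / cf ^ 2) * ∫ x in Iio (0:ℝ), x * Real.exp (x / cf) * K x) < 0) := by
  obtain ⟨α, -, ρ, hρ, hdecay⟩ := hKdecay
  have hKb : ∀ s ≤ 0, |K s| ≤ α * exp (ρ * s) := fun s hs => by
    simpa only [abs_of_nonpos hs, neg_mul_neg] using hdecay s
  refine ⟨fun c hc => hasDerivAt_phiF hK hρ hKb hc, fun hcf hphi hU => ?_⟩
  have hI := integral_exp_div_mul_Uf hK hρ hKb hcf
  have hlt := integral_exp_div_mul_Uf_lt hK hρ hKb hcf hU
  rw [hphi] at hI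
  constructor
  · rw [hI]
    field_simp
    ring
  · have hT : ∫ x in Iio 0, x * exp (x / cf) * K x < 0 := by linarith
    exact mul_neg_of_pos_of_neg (by positivity) hT

theorem statement2 (K : ℝ → ℝ) (θ cf : ℝ)
    (hK : Continuous K)
    (hKdecay : ∃ α > (0:ℝ), ∃ ρ > (0:ℝ), ∀ x : ℝ, |K x| ≤ α * Real.exp (-ρ * |x|))
    (hKint : (∫ x : ℝ, K x) = 1)
    (hθ : 0 < θ) :
    (∀ c : ℝ, 0 < c →
      HasDerivAt (phiF K) ((1 / c ^ 2) * ∫ x in Iio (0:ℝ), x * Real.exp (x / c) * K x) c) ∧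
    (0 < cf → phiF K cf = θ → (∀ z < 0, Uf K cf z < θ) →
      ((1 / cf ^ 2) * ∫ x in Iio (0:ℝ), x * Real.exp (x / cf) * K x)
          = -(1 / cf) * (θ - (1 / cf) * ∫ x in Iio (0:ℝ), Real.exp (x / cf) * Uf K cf x) ∧
      ((1 / cf ^ 2) * ∫ x in Iio (0:ℝ), x * Real.exp (x / cf) * K x) < 0) :=
  statement2_general K θ cf hK hKdecay
end

section
/- Let γ > 0, let ε > 0 satisfy (1−γε)² > 4ε, and let a > 0 and c > 0 be arbitrary. Then the functions U and Q satisfy U(z) → 0 and Q(z) → 0 both as z → −∞ and as z → +∞. -/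
/-!
Substituting `x = z + t` turns `U(z)` into `∫_{t ≤ 0} C_x(t) φ(t + z) dt` with the window integral
`φ(x) = ∫_{x-a}^x K`, and likewise for `Q`. Both roots `ω₁ ≥ ω₂` are positive, so `C_x` and `D_x`
are integrable on `(-∞, 0]`; the exponential decay of `K` makes `φ` bounded and exponentially
decaying. Dominated convergence then gives the limit `0` as `|z| → ∞`.
-/

open MeasureTheory Real Filter Set Topology

noncomputable def om1 (γ ε : ℝ) : ℝ := (1 + γ * ε + Real.sqrt ((1 - γ * ε) ^ 2 - 4 * ε)) / 2

noncomputable def om2 (γ ε : ℝ) : ℝ := (1 + γ * ε - Real.sqrt ((1 - γ * ε) ^ 2 - 4 * ε)) / 2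

/-- `C_x(x,c,ε)`. -/
noncomputable def Cx (γ x c ε : ℝ) : ℝ :=
  (1 / (c * (om1 γ ε - om2 γ ε))) *
    ((1 - om2 γ ε) * Real.exp (om1 γ ε * x / c) - (1 - om1 γ ε) * Real.exp (om2 γ ε * x / c))

/-- `D_x(x,c,ε)`. -/
noncomputable def Dx (γ x c ε : ℝ) : ℝ :=
  (ε / (c * (om1 γ ε - om2 γ ε))) *
    (-Real.exp (om1 γ ε * x / c) + Real.exp (om2 γ ε * x / c))

/-- Formal pulse component `U(z)`. -/
noncomputable def Upulse (K : ℝ → ℝ) (γ a c ε z : ℝ) : ℝ :=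
  ∫ x in Iic z, Cx γ (x - z) c ε * ∫ y in (x - a)..x, K y

/-- Formal pulse component `Q(z)`. -/
noncomputable def Qpulse (K : ℝ → ℝ) (γ a c ε z : ℝ) : ℝ :=
  ∫ x in Iic z, Dx γ (x - z) c ε * ∫ y in (x - a)..x, K y

theorem om2_pos {γ ε : ℝ} (hγ : 0 ≤ γ) (hε : 0 < ε) : 0 < om2 γ ε := by
  have h1 : 0 < 1 + γ * ε := by positivity
  have h2 : √((1 - γ * ε) ^ 2 - 4 * ε) < 1 + γ * ε := by
    rw [Real.sqrt_lt' h1]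
    -- `(1 + γε)² - ((1 - γε)² - 4ε) = 4ε(1 + γ)`
    nlinarith
  unfold om2
  linarith

theorem om2_le_om1 (γ ε : ℝ) : om2 γ ε ≤ om1 γ ε := by
  unfold om1 om2
  linarith [Real.sqrt_nonneg ((1 - γ * ε) ^ 2 - 4 * ε)]

theorem integrableOn_exp_mul_div_Iic {b c : ℝ} (hb : 0 < b) (hc : 0 < c) (s : ℝ) :
    IntegrableOn (fun t => exp (b * t / c)) (Iic s) := by
  simpa [div_mul_eq_mul_div] using integrableOn_exp_mul_Iic (div_pos hb hc) s

theorem integrableOn_Cx_Iic {γ c ε : ℝ} (hγ : 0 ≤ γ) (hε : 0 < ε) (hc : 0 < c) (s : ℝ) :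
    IntegrableOn (fun t => Cx γ t c ε) (Iic s) := by
  have hω₂ := om2_pos hγ hε
  have hω₁ := hω₂.trans_le (om2_le_om1 γ ε)
  exact (((integrableOn_exp_mul_div_Iic hω₁ hc s).const_mul _).sub
    ((integrableOn_exp_mul_div_Iic hω₂ hc s).const_mul _)).const_mul _

theorem integrableOn_Dx_Iic {γ c ε : ℝ} (hγ : 0 ≤ γ) (hε : 0 < ε) (hc : 0 < c) (s : ℝ) :
    IntegrableOn (fun t => Dx γ t c ε) (Iic s) := by
  have hω₂ := om2_pos hγ hε
  have hω₁ := hω₂.trans_le (om2_le_om1 γ ε)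
  exact ((integrableOn_exp_mul_div_Iic hω₁ hc s).neg.add
    (integrableOn_exp_mul_div_Iic hω₂ hc s)).const_mul _

theorem continuous_intervalIntegral_sub_const {K : ℝ → ℝ} (hK : Continuous K) (a : ℝ) :
    Continuous fun x => ∫ y in (x - a)..x, K y := by
  have hKi : ∀ u v : ℝ, IntervalIntegrable K volume u v := hK.intervalIntegrable
  have hF := intervalIntegral.continuous_primitive hKi 0
  have hdiff : (fun x => ∫ y in (x - a)..x, K y) =
      fun x => (∫ y in (0:ℝ)..x, K y) - ∫ y in (0:ℝ)..(x - a), K y :=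
    funext fun x => (intervalIntegral.integral_interval_sub_left (hKi 0 x) (hKi 0 (x - a))).symm
  rw [hdiff]
  exact hF.sub (hF.comp (continuous_sub_right a))

theorem abs_intervalIntegral_sub_const_le {K : ℝ → ℝ} {α ρ : ℝ} (hρ : 0 ≤ ρ)
    (hK : ∀ y, |K y| ≤ α * exp (-ρ * |y|)) (a x : ℝ) :
    |∫ y in (x - a)..x, K y| ≤ α * exp (ρ * |a|) * |a| * exp (-ρ * |x|) := by
  have hbound : ∀ y ∈ uIoc (x - a) x, ‖K y‖ ≤ α * exp (ρ * |a|) * exp (-ρ * |x|) := by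
    intro y hy
    have hxy : |x - y| ≤ |a| := by
      simpa only [sub_sub_cancel] using abs_sub_right_of_mem_uIcc (uIoc_subset_uIcc hy)
    have hα : 0 ≤ α := by simpa using (abs_nonneg _).trans (hK 0)
    calc ‖K y‖ ≤ α * exp (-ρ * |y|) := hK y
      _ ≤ α * exp (ρ * |a| + -ρ * |x|) := by
        gcongr
        nlinarith [abs_sub_abs_le_abs_sub x y]
      _ = α * exp (ρ * |a|) * exp (-ρ * |x|) := by rw [exp_add, mul_assoc]
  have := intervalIntegral.norm_integral_le_of_norm_le_const hbound
  rw [sub_sub_cancel] at this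
  simpa only [Real.norm_eq_abs, mul_right_comm _ (exp _) |a|] using this

theorem abs_le_of_abs_le_mul_exp_neg_abs {f : ℝ → ℝ} {C ρ : ℝ} (hρ : 0 ≤ ρ)
    (hf : ∀ x, |f x| ≤ C * exp (-ρ * |x|)) (x : ℝ) : |f x| ≤ C := by
  have hC : 0 ≤ C := by simpa using (abs_nonneg _).trans (hf 0)
  refine (hf x).trans (mul_le_of_le_one_right hC ?_)
  rw [exp_le_one_iff]
  nlinarith [abs_nonneg x]

theorem tendsto_cocompact_of_abs_le_mul_exp_neg_abs {f : ℝ → ℝ} {C ρ : ℝ} (hρ : 0 < ρ)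
    (hf : ∀ x, |f x| ≤ C * exp (-ρ * |x|)) : Tendsto f (cocompact ℝ) (𝓝 0) := by
  have hexp : Tendsto (fun x : ℝ => C * exp (-ρ * |x|)) (cocompact ℝ) (𝓝 0) := by
    have h := tendsto_neg_atTop_atBot.comp
      ((tendsto_norm_cocompact_atTop (E := ℝ)).const_mul_atTop hρ)
    simpa [Function.comp_def] using (tendsto_exp_atBot.comp h).const_mul C
  exact squeeze_zero_norm hf hexp

theorem setIntegral_Iic_eq_comp_add (f : ℝ → ℝ) (z : ℝ) :
    ∫ x in Iic z, f x = ∫ t in Iic (0:ℝ), f (t + z) := by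
  rw [← (measurePreserving_add_right volume z).setIntegral_preimage_emb
    (measurableEmbedding_addRight z)]
  simp

theorem tendsto_integral_mul_comp_add_cocompact {μ : Measure ℝ} {g φ : ℝ → ℝ} {M : ℝ}
    (hg : Integrable g μ) (hφ : Measurable φ) (hM : ∀ x, |φ x| ≤ M)
    (hφ0 : Tendsto φ (cocompact ℝ) (𝓝 0)) :
    Tendsto (fun z => ∫ t, g t * φ (t + z) ∂μ) (cocompact ℝ) (𝓝 0) := by
  have hlim : ∀ t, Tendsto (fun z => g t * φ (t + z)) (cocompact ℝ) (𝓝 0) := fun t => by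
    simpa using
      (hφ0.comp (Homeomorph.addLeft t).isClosedEmbedding.tendsto_cocompact).const_mul (g t)
  rw [cocompact_eq_atBot_atTop] at hlim ⊢
  simpa using tendsto_integral_filter_of_dominated_convergence
    (F := fun z t => g t * φ (t + z)) (fun t => ‖g t‖ * M)
    (Eventually.of_forall fun z =>
      hg.aestronglyMeasurable.mul (hφ.comp (measurable_add_const z)).aestronglyMeasurable)
    (Eventually.of_forall fun z => Eventually.of_forall fun t => by
      rw [norm_mul]
      exact mul_le_mul_of_nonneg_left (hM _) (norm_nonneg _))
    (hg.norm.mul_const M) (Eventually.of_forall hlim)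

theorem tendsto_setIntegral_Iic_mul_cocompact {g φ : ℝ → ℝ} {M : ℝ}
    (hg : IntegrableOn g (Iic 0)) (hφ : Measurable φ) (hM : ∀ x, |φ x| ≤ M)
    (hφ0 : Tendsto φ (cocompact ℝ) (𝓝 0)) :
    Tendsto (fun z => ∫ x in Iic z, g (x - z) * φ x) (cocompact ℝ) (𝓝 0) := by
  simp_rw [setIntegral_Iic_eq_comp_add (fun x => _ * φ x), add_sub_cancel_right]
  exact tendsto_integral_mul_comp_add_cocompact hg hφ hM hφ0

theorem statement4_general (K : ℝ → ℝ)
    (hK : Continuous K)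
    (hKdecay : ∃ α > (0:ℝ), ∃ ρ > (0:ℝ), ∀ x : ℝ, |K x| ≤ α * Real.exp (-ρ * |x|))
    (γ a c ε : ℝ) (hγ : 0 < γ) (hε : 0 < ε)
    (hc : 0 < c) :
    Tendsto (Upulse K γ a c ε) atBot (𝓝 0) ∧
    Tendsto (Upulse K γ a c ε) atTop (𝓝 0) ∧
    Tendsto (Qpulse K γ a c ε) atBot (𝓝 0) ∧
    Tendsto (Qpulse K γ a c ε) atTop (𝓝 0) := by
  obtain ⟨α, -, ρ, hρ, hKρ⟩ := hKdecay
  have hbound := abs_intervalIntegral_sub_const_le hρ.le hKρ a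
  have hpulse : ∀ g : ℝ → ℝ, IntegrableOn g (Iic 0) → Tendsto
      (fun z => ∫ x in Iic z, g (x - z) * ∫ y in (x - a)..x, K y) (cocompact ℝ) (𝓝 0) :=
    fun g hg => tendsto_setIntegral_Iic_mul_cocompact hg
      (continuous_intervalIntegral_sub_const hK a).measurable
      (abs_le_of_abs_le_mul_exp_neg_abs hρ.le hbound)
      (tendsto_cocompact_of_abs_le_mul_exp_neg_abs hρ hbound)
  have hU := hpulse _ (integrableOn_Cx_Iic hγ.le hε hc 0)
  have hQ := hpulse _ (integrableOn_Dx_Iic hγ.le hε hc 0)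
  exact ⟨hU.mono_left atBot_le_cocompact, hU.mono_left atTop_le_cocompact,
    hQ.mono_left atBot_le_cocompact, hQ.mono_left atTop_le_cocompact⟩

theorem statement4 (K : ℝ → ℝ)
    (hK : Continuous K)
    (hKdecay : ∃ α > (0:ℝ), ∃ ρ > (0:ℝ), ∀ x : ℝ, |K x| ≤ α * Real.exp (-ρ * |x|))
    (hKint : (∫ x : ℝ, K x) = 1)
    (γ a c ε : ℝ) (hγ : 0 < γ) (hε : 0 < ε) (hdisc : 4 * ε < (1 - γ * ε) ^ 2)
    (ha : 0 < a) (hc : 0 < c) :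
    Tendsto (Upulse K γ a c ε) atBot (𝓝 0) ∧
    Tendsto (Upulse K γ a c ε) atTop (𝓝 0) ∧
    Tendsto (Qpulse K γ a c ε) atBot (𝓝 0) ∧
    Tendsto (Qpulse K γ a c ε) atTop (𝓝 0) :=
  statement4_general K hK hKdecay γ a c ε hγ hε hc
end

section
/- Fix τ > 0, c > 0 and γ > 0. Then f(τ,c,ε) → φ_f(c) as ε → 0⁺. -/
/-!
As `ε → 0⁺` we have `ω₁ → 1` and `ω₂ → 0`, so `C_x(x,c,ε) → e^{x/c}/c`, with `|C_x| ≤ 4/c` on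
`x ≤ 0` for small `ε`; meanwhile `∫_{x-τ/ε}^x K → ∫_{-∞}^x K`, dominated by the exponentially
small tail `∫_{-∞}^x |K|`. Dominated convergence gives the limit
`∫_{-∞}^0 (e^{x/c}/c) ∫_{-∞}^x K dx`, and integrating by parts against `d(e^{x/c})` turns this
into `φ_f(c)`.
-/

open MeasureTheory Real Filter Set Topology

/-- Pulse speed index function `f(τ,c,ε) = U(0)`. -/
noncomputable def ff (K : ℝ → ℝ) (γ τ c ε : ℝ) : ℝ :=
  ∫ x in Iio (0:ℝ), Cx γ x c ε * ∫ y in (x - τ / ε)..x, K y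

section Decay

variable {K : ℝ → ℝ} {α ρ : ℝ}

lemma integrable_of_abs_le_mul_exp_neg_mul_abs (hK : AEStronglyMeasurable K) (hρ : 0 < ρ)
    (hKK : ∀ x, |K x| ≤ α * exp (-ρ * |x|)) : Integrable K := by
  refine Integrable.mono' ?_ hK (ae_of_all _ hKK)
  rw [← integrableOn_univ, ← Iic_union_Ioi (a := (0:ℝ)), integrableOn_union]
  constructor
  · refine IntegrableOn.congr_fun ((integrableOn_exp_mul_Iic hρ 0).const_mul α)
      (fun y hy => ?_) measurableSet_Iic
    rw [abs_of_nonpos (mem_Iic.mp hy), neg_mul_neg]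
  · refine IntegrableOn.congr_fun ((exp_neg_integrableOn_Ioi 0 hρ).const_mul α)
      (fun y hy => ?_) measurableSet_Ioi
    rw [abs_of_pos (mem_Ioi.mp hy), neg_mul]

lemma integral_Iic_abs_le_of_abs_le_mul_exp_neg_mul_abs (hKi : Integrable K) (hρ : 0 < ρ)
    (hKK : ∀ x, |K x| ≤ α * exp (-ρ * |x|)) {x : ℝ} (hx : x ≤ 0) :
    ∫ y in Iic x, |K y| ≤ α / ρ * exp (ρ * x) := by
  calc ∫ y in Iic x, |K y| ≤ ∫ y in Iic x, α * exp (ρ * y) := by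
        refine setIntegral_mono_on hKi.abs.integrableOn
          ((integrableOn_exp_mul_Iic hρ x).const_mul α) measurableSet_Iic fun y hy => ?_
        have := hKK y
        rwa [abs_of_nonpos ((mem_Iic.mp hy).trans hx), neg_mul_neg] at this
    _ = α / ρ * exp (ρ * x) := by
        rw [integral_const_mul, integral_exp_mul_Iic hρ]; ring

lemma integrableOn_integral_Iic_abs_of_abs_le_mul_exp_neg_mul_abs (hKi : Integrable K)
    (hρ : 0 < ρ) (hKK : ∀ x, |K x| ≤ α * exp (-ρ * |x|)) :
    IntegrableOn (fun x => ∫ y in Iic x, |K y|) (Iio 0) := by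
  have hmono : Monotone fun x => ∫ y in Iic x, |K y| := fun a b hab =>
    setIntegral_mono_set hKi.abs.integrableOn (ae_of_all _ fun y => abs_nonneg _)
      (Iic_subset_Iic.mpr hab).eventuallyLE
  refine Integrable.mono' (((integrableOn_exp_mul_Iic hρ 0).mono_set Iio_subset_Iic_self).const_mul
    (α / ρ)) hmono.measurable.aestronglyMeasurable ?_
  filter_upwards [ae_restrict_mem measurableSet_Iio] with x hx
  rw [norm_of_nonneg (integral_nonneg fun y => abs_nonneg _)]
  exact integral_Iic_abs_le_of_abs_le_mul_exp_neg_mul_abs hKi hρ hKK hx.le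

end Decay

section Kernel

variable {γ c ε : ℝ}

@[fun_prop] lemma continuous_om1 (γ : ℝ) : Continuous (om1 γ) := by
  unfold om1; fun_prop

@[fun_prop] lemma continuous_om2 (γ : ℝ) : Continuous (om2 γ) := by
  unfold om2; fun_prop

@[simp] lemma om1_zero (γ : ℝ) : om1 γ 0 = 1 := by
  simp [om1]

@[simp] lemma om2_zero (γ : ℝ) : om2 γ 0 = 0 := by
  simp [om2]

lemma om2_nonneg (hγ : 0 ≤ γ) (hε : 0 ≤ ε) (hγε : γ * ε ≤ 1) : 0 ≤ om2 γ ε := by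
  have : √((1 - γ * ε) ^ 2 - 4 * ε) ≤ 1 - γ * ε :=
    Real.sqrt_le_iff.mpr ⟨by linarith, by linarith⟩
  unfold om2
  linarith [mul_nonneg hγ hε]

lemma exp_mul_div_le_one {a x : ℝ} (ha : 0 ≤ a) (hx : x ≤ 0) (hc : 0 ≤ c) :
    exp (a * x / c) ≤ 1 :=
  exp_le_one_iff.mpr (div_nonpos_of_nonpos_of_nonneg (mul_nonpos_of_nonneg_of_nonpos ha hx) hc)

lemma abs_Cx_le {x : ℝ} (hc : 0 < c) (hx : x ≤ 0) (hom2 : 0 ≤ om2 γ ε)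
    (hgap : 1 / 2 ≤ om1 γ ε - om2 γ ε) (hom1 : om1 γ ε ≤ 2) :
    |Cx γ x c ε| ≤ 4 / c := by
  have hom1' : |1 - om1 γ ε| ≤ 1 := abs_le.mpr ⟨by linarith, by linarith⟩
  have hom2' : |1 - om2 γ ε| ≤ 1 := abs_le.mpr ⟨by linarith, by linarith⟩
  have he1 := exp_mul_div_le_one (by linarith : 0 ≤ om1 γ ε) hx hc.le
  have he2 := exp_mul_div_le_one hom2 hx hc.le
  have hfactor : |1 / (c * (om1 γ ε - om2 γ ε))| ≤ 2 / c := by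
    rw [abs_of_pos (by positivity), div_le_div_iff₀ (by positivity) hc]
    nlinarith
  have hbracket :
      |(1 - om2 γ ε) * exp (om1 γ ε * x / c) - (1 - om1 γ ε) * exp (om2 γ ε * x / c)| ≤ 2 := by
    refine (abs_sub _ _).trans ?_
    rw [abs_mul, abs_mul, abs_of_pos (exp_pos _), abs_of_pos (exp_pos _)]
    nlinarith [abs_nonneg (1 - om1 γ ε), abs_nonneg (1 - om2 γ ε)]
  rw [Cx, abs_mul]
  calc _ ≤ 2 / c * 2 := mul_le_mul hfactor hbracket (abs_nonneg _) (by positivity)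
    _ = 4 / c := by ring

lemma eventually_abs_Cx_le (hγ : 0 < γ) (hc : 0 < c) :
    ∀ᶠ ε in 𝓝[>] 0, ∀ x ≤ 0, |Cx γ x c ε| ≤ 4 / c := by
  have hnhds :
      ∀ᶠ ε in 𝓝 (0 : ℝ), γ * ε < 1 ∧ 1 / 2 < om1 γ ε - om2 γ ε ∧ om1 γ ε < 2 :=
    (ContinuousAt.eventually_lt (by fun_prop) (by fun_prop) (by simp)).and <|
      (ContinuousAt.eventually_lt (by fun_prop) (by fun_prop) (by norm_num)).and
      (ContinuousAt.eventually_lt (by fun_prop) (by fun_prop) (by norm_num))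
  filter_upwards [nhdsWithin_le_nhds hnhds, self_mem_nhdsWithin]
    with ε ⟨hγε, hgap, hom1⟩ hε x hx
  exact abs_Cx_le hc hx (om2_nonneg hγ.le (le_of_lt hε) hγε.le) hgap.le hom1.le

lemma tendsto_Cx (hc : 0 < c) (x : ℝ) :
    Tendsto (fun ε => Cx γ x c ε) (𝓝 0) (𝓝 (exp (x / c) / c)) := by
  have hcont : ContinuousAt (fun ε => Cx γ x c ε) 0 := by
    unfold Cx
    exact (continuousAt_const.div (by fun_prop) (by simpa using hc.ne')).mul (by fun_prop)
  convert hcont.tendsto using 2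
  simp [Cx]
  ring

end Kernel

section Limit

variable {K : ℝ → ℝ}

lemma abs_intervalIntegral_le_integral_Iic_abs (hKi : Integrable K) {a x : ℝ} (hax : a ≤ x) :
    |∫ y in a..x, K y| ≤ ∫ y in Iic x, |K y| :=
  calc |∫ y in a..x, K y|
      ≤ ∫ y in a..x, |K y| := intervalIntegral.abs_integral_le_integral_abs hax
    _ = ∫ y in Ioc a x, |K y| := intervalIntegral.integral_of_le hax
    _ ≤ ∫ y in Iic x, |K y| := setIntegral_mono_set hKi.abs.integrableOn
        (ae_of_all _ fun _ => abs_nonneg _) Ioc_subset_Iic_self.eventuallyLE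

lemma continuous_intervalIntegral_sub_left (hKi : Integrable K) (d : ℝ) :
    Continuous fun x => ∫ y in (x - d)..x, K y := by
  have hKii : ∀ a b, IntervalIntegrable K volume a b := fun _ _ => hKi.intervalIntegrable
  have hP := intervalIntegral.continuous_primitive hKii 0
  exact (hP.sub (hP.comp (continuous_sub_right d))).congr fun x =>
    intervalIntegral.integral_interval_sub_left (hKii 0 x) (hKii 0 (x - d))

theorem tendsto_ff_nhdsGT_zero (hKi : Integrable K)
    (htail : IntegrableOn (fun x => ∫ y in Iic x, |K y|) (Iio 0))
    {γ τ c : ℝ} (hτ : 0 < τ) (hc : 0 < c) (hγ : 0 < γ) :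
    Tendsto (fun ε => ff K γ τ c ε) (𝓝[>] 0)
      (𝓝 (∫ x in Iio 0, exp (x / c) / c * ∫ y in Iic x, K y)) := by
  refine tendsto_integral_filter_of_dominated_convergence (fun x => 4 / c * ∫ y in Iic x, |K y|)
    (Eventually.of_forall fun ε => ?_) ?_ (htail.const_mul _) ?_
  · have hCx : Continuous fun x => Cx γ x c ε := by unfold Cx; fun_prop
    exact (hCx.mul (continuous_intervalIntegral_sub_left hKi _)).aestronglyMeasurable
  · filter_upwards [eventually_abs_Cx_le hγ hc, self_mem_nhdsWithin] with ε hCx hε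
    filter_upwards [ae_restrict_mem measurableSet_Iio] with x hx
    rw [norm_mul, Real.norm_eq_abs, Real.norm_eq_abs]
    have hτε : x - τ / ε ≤ x := sub_le_self _ (div_pos hτ hε).le
    exact mul_le_mul (hCx x hx.le) (abs_intervalIntegral_le_integral_Iic_abs hKi hτε)
      (abs_nonneg _) (by positivity)
  · refine Eventually.of_forall fun x => ((tendsto_Cx hc x).mono_left nhdsWithin_le_nhds).mul ?_
    refine intervalIntegral_tendsto_integral_Iic x hKi.integrableOn ?_
    exact tendsto_atBot_add_const_left _ x
      (tendsto_neg_atTop_atBot.comp (tendsto_inv_nhdsGT_zero.const_mul_atTop hτ))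

end Limit

section IntegrationByParts

variable {K : ℝ → ℝ}

lemma hasDerivAt_integral_Iic_s5 (hK : Continuous K) (hKi : Integrable K) (x : ℝ) :
    HasDerivAt (fun t => ∫ y in Iic t, K y) (K x) x := by
  have hF : (fun t => ∫ y in Iic t, K y) =
      fun t => (∫ y in (0 : ℝ)..t, K y) + ∫ y in Iic 0, K y := by
    funext t
    rw [← intervalIntegral.integral_Iic_sub_Iic hKi.integrableOn hKi.integrableOn, sub_add_cancel]
  rw [hF]
  exact (hK.integral_hasStrictDerivAt 0 x).hasDerivAt.add_const _

lemma abs_integral_Iic_le_integral_abs (hKi : Integrable K) (x : ℝ) :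
    |∫ y in Iic x, K y| ≤ ∫ y, |K y| :=
  (abs_integral_le_integral_abs).trans
    (setIntegral_le_integral hKi.abs (ae_of_all _ fun _ => abs_nonneg _))

theorem integral_exp_div_mul_integral_Iic_eq_phiF (hK : Continuous K) (hKi : Integrable K)
    {c : ℝ} (hc : 0 < c) :
    ∫ x in Iio 0, exp (x / c) / c * ∫ y in Iic x, K y = phiF K c := by
  set F := fun t => ∫ y in Iic t, K y
  have hexp : ∀ x : ℝ, HasDerivAt (fun t => exp (t / c)) (exp (x / c) / c) x := fun x => by
    simpa [div_eq_mul_inv, mul_comm] using ((hasDerivAt_id x).div_const c).exp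
  have hderiv : ∀ x : ℝ, HasDerivAt (fun t => exp (t / c) * F t)
      (exp (x / c) / c * F x + exp (x / c) * K x) x := fun x =>
    (hexp x).mul (hasDerivAt_integral_Iic_s5 hK hKi x)
  have hexp_le : ∀ x ∈ Iic (0 : ℝ), ‖exp (x / c)‖ ≤ 1 := fun x hx => by
    rw [norm_of_nonneg (exp_pos _).le, exp_le_one_iff]
    exact div_nonpos_of_nonpos_of_nonneg hx hc.le
  have hFcont : Continuous F := continuous_iff_continuousAt.mpr fun x =>
    (hasDerivAt_integral_Iic_s5 hK hKi x).continuousAt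
  have hFbdd : ∀ x, ‖F x‖ ≤ ∫ y, |K y| := fun x => abs_integral_Iic_le_integral_abs hKi x
  have hint1 : IntegrableOn (fun x => exp (x / c) / c * F x) (Iic 0) :=
    (IntegrableOn.congr_fun ((integrableOn_exp_mul_Iic (inv_pos.mpr hc) 0).div_const c)
      (fun x _ => by simp [div_eq_mul_inv, mul_comm]) measurableSet_Iic).mul_bdd
      hFcont.aestronglyMeasurable (ae_of_all _ hFbdd)
  have hint2 : IntegrableOn (fun x => exp (x / c) * K x) (Iic 0) :=
    hKi.integrableOn.bdd_mul (by fun_prop) ((ae_restrict_iff' measurableSet_Iic).mpr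
      (ae_of_all _ hexp_le))
  have hlim : Tendsto (fun t => exp (t / c) * F t) atBot (𝓝 0) :=
    (tendsto_exp_atBot.comp (tendsto_id.atBot_div_const hc)).zero_mul_isBoundedUnder_le
      (isBoundedUnder_of ⟨_, hFbdd⟩)
  have hibp := integral_Iic_of_hasDerivAt_of_tendsto' (fun x _ => hderiv x) (hint1.add hint2) hlim
  rw [integral_add hint1 hint2, zero_div, exp_zero, one_mul, sub_zero] at hibp
  rw [phiF, ← integral_Iic_eq_integral_Iio, ← integral_Iic_eq_integral_Iio,
    ← integral_Iic_eq_integral_Iio]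
  linarith

end IntegrationByParts

theorem statement5_general (K : ℝ → ℝ)
    (hK : Continuous K)
    (hKdecay : ∃ α > (0:ℝ), ∃ ρ > (0:ℝ), ∀ x : ℝ, |K x| ≤ α * Real.exp (-ρ * |x|))
    (τ c γ : ℝ) (hτ : 0 < τ) (hc : 0 < c) (hγ : 0 < γ) :
    Tendsto (fun ε => ff K γ τ c ε) (𝓝[>] (0:ℝ)) (𝓝 (phiF K c)) := by
  obtain ⟨α, -, ρ, hρ, hKK⟩ := hKdecay
  have hKi : Integrable K :=
    integrable_of_abs_le_mul_exp_neg_mul_abs hK.aestronglyMeasurable hρ hKK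
  have hlim := tendsto_ff_nhdsGT_zero hKi
    (integrableOn_integral_Iic_abs_of_abs_le_mul_exp_neg_mul_abs hKi hρ hKK) hτ hc hγ
  rwa [integral_exp_div_mul_integral_Iic_eq_phiF hK hKi hc] at hlim

theorem statement5 (K : ℝ → ℝ)
    (hK : Continuous K)
    (hKdecay : ∃ α > (0:ℝ), ∃ ρ > (0:ℝ), ∀ x : ℝ, |K x| ≤ α * Real.exp (-ρ * |x|))
    (hKint : (∫ x : ℝ, K x) = 1)
    (τ c γ : ℝ) (hτ : 0 < τ) (hc : 0 < c) (hγ : 0 < γ) :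
    Tendsto (fun ε => ff K γ τ c ε) (𝓝[>] (0:ℝ)) (𝓝 (phiF K c)) :=
  statement5_general K hK hKdecay τ c γ hτ hc hγ
end
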